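/- arXiv:1711.08454 — 4 statements merged into one kernel-verified Lean document; each statement's English description precedes it below -/
import Mathlib

section
/- Let C and D be triangulated categories with small coproducts, C generated as its own localizing subcategory by a triangulated subcategory C' of compact objects, and let F : C → D be an exact coproduct-preserving functor whose restriction to C' is fully faithful and sends objects of C' to compact objects of D. Then F is fully faithful. -/
open CategoryTheory CategoryTheory.Limits CategoryTheory.Pretriangulated

universe v u u'

variable (C : Type u) [Category.{v} C] [HasZeroObject C] [HasShift C ℤ]
  [Preadditive C] [∀ n : ℤ, (shiftFunctor C n).Additive] [Pretriangulated C]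
  [HasCoproducts.{v} C]

/-- An object `M` is compact if `Hom(M, −)` respects (small) coproducts. -/
def IsCompactObj (M : C) : Prop :=
  ∀ J : Type v, Nonempty (PreservesColimitsOfShape (Discrete J)
    (coyoneda.obj (Opposite.op M)))

/-- A class of objects is localizing: closed under isomorphisms, shifts, extensions
(distinguished triangles) and small coproducts. -/
def IsLocalizingClass (T : Set C) : Prop :=
  (∀ ⦃X Y : C⦄, (X ≅ Y) → X ∈ T → Y ∈ T) ∧
  (∀ (n : ℤ) ⦃X : C⦄, X ∈ T → X⟦n⟧ ∈ T) ∧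
  (∀ Tr : Triangle C, Tr ∈ (distTriang C) → Tr.obj₁ ∈ T → Tr.obj₂ ∈ T → Tr.obj₃ ∈ T) ∧
  (∀ ⦃J : Type v⦄ (f : J → C), (∀ j, f j ∈ T) → (∐ f) ∈ T)

/-!
Let `S₁` be the class of objects `Y` such that `F` is bijective on `X ⟶ Y` for all `X ∈ C'`.
It contains `C'` and is localizing: shifts pass through because `C'` is shift-closed, extensions
by the five lemma for the long exact sequences of `Hom(X, -)` and `Hom(F X, -)`, and coproducts
because `X` and `F X` are compact and `F` preserves coproducts. So `S₁` is all of `C`, i.e. the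
class of `X` with `F` bijective on `X ⟶ Y` for all `Y` contains `C'`. It is localizing by the dual
argument, in which coproducts need no compactness, so it is all of `C` as well.
-/

namespace CategoryTheory.Functor

section

variable {𝒞 𝒟 : Type*} [Category 𝒞] [Category 𝒟] (F : 𝒞 ⥤ 𝒟)

lemma bijective_map_of_iso {X X' Y Y' : 𝒞} (e : X ≅ X') (e' : Y ≅ Y')
    (h : Function.Bijective (F.map : (X ⟶ Y) → _)) :
    Function.Bijective (F.map : (X' ⟶ Y') → _) := by
  have hcomm : F.map ∘ e.homCongr e' = (F.mapIso e).homCongr (F.mapIso e') ∘ F.map :=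
    funext (F.map_homCongr e e')
  rw [← Function.Bijective.of_comp_iff _ (e.homCongr e').bijective, hcomm]
  exact (Iso.homCongr _ _).bijective.comp h

lemma bijective_map_shift {A : Type*} [AddGroup A] [HasShift 𝒞 A] [HasShift 𝒟 A]
    [F.CommShift A] (a : A) {X Y : 𝒞} (h : Function.Bijective (F.map : (X ⟶ Y) → _)) :
    Function.Bijective (F.map : (X⟦a⟧ ⟶ Y⟦a⟧) → _) := by
  have hcomm : F.map ∘ (shiftFunctor 𝒞 a).map =
      ((F.commShiftIso a).app X).symm.homCongr ((F.commShiftIso a).app Y).symm ∘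
        (shiftFunctor 𝒟 a).map ∘ F.map := by
    funext f
    simp [Iso.homCongr_apply]
  rw [← Function.Bijective.of_comp_iff _
    ((FullyFaithful.ofFullyFaithful (shiftFunctor 𝒞 a)).map_bijective X Y), hcomm]
  exact (Iso.homCongr _ _).bijective.comp
    (((FullyFaithful.ofFullyFaithful (shiftFunctor 𝒟 a)).map_bijective _ _).comp h)

end

section

variable {𝒞 𝒟 : Type*} [Category.{v} 𝒞] [Category.{v} 𝒟] (F : 𝒞 ⥤ 𝒟)

lemma bijective_map_to_coproduct {J : Type*} (f : J → 𝒞) [HasCoproduct f]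
    [PreservesColimit (Discrete.functor f) F] (X : 𝒞)
    [PreservesColimit (Discrete.functor f) (coyoneda.obj (Opposite.op X))]
    [PreservesColimit (Discrete.functor f ⋙ F) (coyoneda.obj (Opposite.op (F.obj X)))]
    (h : ∀ j, Function.Bijective (F.map : (X ⟶ f j) → _)) :
    Function.Bijective (F.map : (X ⟶ ∐ f) → _) := by
  have hX := isColimitOfPreserves (coyoneda.obj (Opposite.op X))
    (colimit.isColimit (Discrete.functor f))
  have hFX := isColimitOfPreserves (coyoneda.obj (Opposite.op (F.obj X)))
    (isColimitOfPreserves F (colimit.isColimit (Discrete.functor f)))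
  let e := hX.coconePointsIsoOfNatIso hFX
    (Discrete.natIso fun j ↦ (Equiv.ofBijective _ (h j.as)).toIso)
  have he : TypeCat.ofHom F.map = e.hom := hX.hom_ext fun j ↦ by
    rw [IsColimit.comp_coconePointsIsoOfNatIso_hom]
    ext g
    exact F.map_comp _ _
  exact (isIso_iff_bijective (TypeCat.ofHom F.map)).1 (he ▸ inferInstance)

lemma bijective_map_from_coproduct {J : Type*} (f : J → 𝒞) [HasCoproduct f]
    [PreservesColimit (Discrete.functor f) F] (Y : 𝒞)
    (h : ∀ j, Function.Bijective (F.map : (f j ⟶ Y) → _)) :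
    Function.Bijective (F.map : (∐ f ⟶ Y) → _) := by
  have hc := isColimitOfPreserves F (colimit.isColimit (Discrete.functor f))
  refine ⟨fun g₁ g₂ hg ↦ Limits.Sigma.hom_ext _ _ fun j ↦ (h j).1 ?_, fun u ↦ ?_⟩
  · simp only [F.map_comp, hg]
  · choose g hg using fun j ↦ (h j).2 (F.map (Sigma.ι f j) ≫ u)
    exact ⟨Limits.Sigma.desc g, hc.hom_ext fun ⟨j⟩ ↦ by simpa [← F.map_comp] using hg j⟩

end

end CategoryTheory.Functor

section

variable {𝒞 : Type*} [Category 𝒞] [Preadditive 𝒞] [HasZeroObject 𝒞] [HasShift 𝒞 ℤ]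
  [∀ n : ℤ, (shiftFunctor 𝒞 n).Additive] [Pretriangulated 𝒞]

lemma CategoryTheory.Pretriangulated.exact_rightComp_of_distTriang {T : Triangle 𝒞}
    (hT : T ∈ distTriang 𝒞) (X : 𝒞) :
    Function.Exact (Preadditive.rightComp X T.mor₁) (Preadditive.rightComp X T.mor₂) := by
  refine fun g ↦ ⟨fun hg ↦ ?_, ?_⟩
  · obtain ⟨f, rfl⟩ := Triangle.coyoneda_exact₂ T hT g hg
    exact ⟨f, rfl⟩
  · rintro ⟨f, rfl⟩
    exact (Category.assoc _ _ _).trans (by rw [comp_distTriang_mor_zero₁₂ _ hT, comp_zero])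

lemma CategoryTheory.Pretriangulated.exact_leftComp_of_distTriang {T : Triangle 𝒞}
    (hT : T ∈ distTriang 𝒞) (Y : 𝒞) :
    Function.Exact (Preadditive.leftComp Y T.mor₂) (Preadditive.leftComp Y T.mor₁) := by
  refine fun g ↦ ⟨fun hg ↦ ?_, ?_⟩
  · obtain ⟨f, rfl⟩ := Triangle.yoneda_exact₂ T hT g hg
    exact ⟨f, rfl⟩
  · rintro ⟨f, rfl⟩
    exact (Category.assoc _ _ _).symm.trans (by rw [comp_distTriang_mor_zero₁₂ _ hT, zero_comp])

variable {𝒟 : Type*} [Category 𝒟] [Preadditive 𝒟] [HasZeroObject 𝒟] [HasShift 𝒟 ℤ]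
  [∀ n : ℤ, (shiftFunctor 𝒟 n).Additive] [Pretriangulated 𝒟]
  (F : 𝒞 ⥤ 𝒟) [F.CommShift ℤ] [F.IsTriangulated]

namespace CategoryTheory.Functor

/- Five lemma. The rows are exact along `T`, `T.rotate`, `T.rotate.rotate` and their images under
`F`, so every vertical map is `F.map` and the shift isomorphisms of `F` never appear. -/
lemma bijective_map_to_obj₃ {T : Triangle 𝒞} (hT : T ∈ distTriang 𝒞) (X : 𝒞)
    (h₁ : Function.Bijective (F.map : (X ⟶ T.obj₁) → _))
    (h₂ : Function.Bijective (F.map : (X ⟶ T.obj₂) → _))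
    (h₄ : Function.Bijective (F.map : (X ⟶ T.obj₁⟦(1 : ℤ)⟧) → _))
    (h₅ : Function.Bijective (F.map : (X ⟶ T.obj₂⟦(1 : ℤ)⟧) → _)) :
    Function.Bijective (F.map : (X ⟶ T.obj₃) → _) := by
  have hT' := rot_of_distTriang _ hT
  have hT'' := rot_of_distTriang _ hT'
  exact AddMonoidHom.bijective_of_surjective_of_bijective_of_bijective_of_injective
    (i₁ := F.mapAddHom) (i₂ := F.mapAddHom) (i₃ := F.mapAddHom) (i₄ := F.mapAddHom)
    (i₅ := F.mapAddHom) _ _ _ _ _ _ _ _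
    (AddMonoidHom.ext fun _ ↦ (F.map_comp _ _).symm)
    (AddMonoidHom.ext fun _ ↦ (F.map_comp _ _).symm)
    (AddMonoidHom.ext fun _ ↦ (F.map_comp _ _).symm)
    (AddMonoidHom.ext fun _ ↦ (F.map_comp _ _).symm)
    (exact_rightComp_of_distTriang hT X) (exact_rightComp_of_distTriang hT' X)
    (exact_rightComp_of_distTriang hT'' X)
    (exact_rightComp_of_distTriang (F.map_distinguished _ hT) (F.obj X))
    (exact_rightComp_of_distTriang (F.map_distinguished _ hT') (F.obj X))
    (exact_rightComp_of_distTriang (F.map_distinguished _ hT'') (F.obj X))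
    h₁.2 h₂ h₄ h₅.1

lemma bijective_map_from_obj₃ {T : Triangle 𝒞} (hT : T ∈ distTriang 𝒞) (Y : 𝒞)
    (h₁ : Function.Bijective (F.map : (T.obj₂⟦(1 : ℤ)⟧ ⟶ Y) → _))
    (h₂ : Function.Bijective (F.map : (T.obj₁⟦(1 : ℤ)⟧ ⟶ Y) → _))
    (h₄ : Function.Bijective (F.map : (T.obj₂ ⟶ Y) → _))
    (h₅ : Function.Bijective (F.map : (T.obj₁ ⟶ Y) → _)) :
    Function.Bijective (F.map : (T.obj₃ ⟶ Y) → _) := by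
  have hT' := rot_of_distTriang _ hT
  have hT'' := rot_of_distTriang _ hT'
  exact AddMonoidHom.bijective_of_surjective_of_bijective_of_bijective_of_injective
    (i₁ := F.mapAddHom) (i₂ := F.mapAddHom) (i₃ := F.mapAddHom) (i₄ := F.mapAddHom)
    (i₅ := F.mapAddHom) _ _ _ _ _ _ _ _
    (AddMonoidHom.ext fun _ ↦ (F.map_comp _ _).symm)
    (AddMonoidHom.ext fun _ ↦ (F.map_comp _ _).symm)
    (AddMonoidHom.ext fun _ ↦ (F.map_comp _ _).symm)
    (AddMonoidHom.ext fun _ ↦ (F.map_comp _ _).symm)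
    (exact_leftComp_of_distTriang hT'' Y) (exact_leftComp_of_distTriang hT' Y)
    (exact_leftComp_of_distTriang hT Y)
    (exact_leftComp_of_distTriang (F.map_distinguished _ hT'') (F.obj Y))
    (exact_leftComp_of_distTriang (F.map_distinguished _ hT') (F.obj Y))
    (exact_leftComp_of_distTriang (F.map_distinguished _ hT) (F.obj Y))
    h₁.2 h₂ h₄ h₅.1

end CategoryTheory.Functor

end

section

variable {C} {D : Type*} [Category.{v} D] [HasZeroObject D] [HasShift D ℤ] [Preadditive D]
  [∀ n : ℤ, (shiftFunctor D n).Additive] [Pretriangulated D]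
  (F : C ⥤ D) [F.CommShift ℤ] [F.IsTriangulated]
  [∀ J : Type v, PreservesColimitsOfShape (Discrete J) F]

namespace CategoryTheory.Functor

lemma isLocalizingClass_setOf_bijective_map_of_source_mem (S : Set C)
    (hS : ∀ (n : ℤ) ⦃X : C⦄, X ∈ S → X⟦n⟧ ∈ S) (hcpt : ∀ X ∈ S, IsCompactObj C X)
    [HasCoproducts.{v} D] (hFcpt : ∀ X ∈ S, IsCompactObj D (F.obj X)) :
    IsLocalizingClass C {Y | ∀ X ∈ S, Function.Bijective (F.map : (X ⟶ Y) → _)} := by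
  have hshift (n : ℤ) {Y : C} (hY : ∀ X ∈ S, Function.Bijective (F.map : (X ⟶ Y) → _)) :
      ∀ X ∈ S, Function.Bijective (F.map : (X ⟶ Y⟦n⟧) → _) := fun X hX ↦
    F.bijective_map_of_iso ((shiftFunctorCompIsoId C (-n) n (neg_add_cancel n)).app X)
      (Iso.refl _) (F.bijective_map_shift n (hY _ (hS (-n) hX)))
  refine ⟨fun Y Y' e hY X hX ↦ F.bijective_map_of_iso (Iso.refl X) e (hY X hX), hshift,
    fun T hT h₁ h₂ X hX ↦ F.bijective_map_to_obj₃ hT X (h₁ X hX) (h₂ X hX)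
      (hshift 1 h₁ X hX) (hshift 1 h₂ X hX), fun J f hf X hX ↦ ?_⟩
  have := (hcpt X hX J).some
  have := (hFcpt X hX J).some
  exact F.bijective_map_to_coproduct f X fun j ↦ hf j X hX

lemma isLocalizingClass_setOf_bijective_map_of_target_mem (S : Set C)
    (hS : ∀ (n : ℤ) ⦃Y : C⦄, Y ∈ S → Y⟦n⟧ ∈ S) :
    IsLocalizingClass C {X | ∀ Y ∈ S, Function.Bijective (F.map : (X ⟶ Y) → _)} := by
  have hshift (n : ℤ) {X : C} (hX : ∀ Y ∈ S, Function.Bijective (F.map : (X ⟶ Y) → _)) :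
      ∀ Y ∈ S, Function.Bijective (F.map : (X⟦n⟧ ⟶ Y) → _) := fun Y hY ↦
    F.bijective_map_of_iso (Iso.refl _)
      ((shiftFunctorCompIsoId C (-n) n (neg_add_cancel n)).app Y)
      (F.bijective_map_shift n (hX _ (hS (-n) hY)))
  exact ⟨fun X X' e hX Y hY ↦ F.bijective_map_of_iso e (Iso.refl Y) (hX Y hY), hshift,
    fun T hT h₁ h₂ Y hY ↦ F.bijective_map_from_obj₃ hT Y (hshift 1 h₂ Y hY)
      (hshift 1 h₁ Y hY) (h₂ Y hY) (h₁ Y hY),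
    fun J f hf Y hY ↦ F.bijective_map_from_coproduct f Y fun j ↦ hf j Y hY⟩

end CategoryTheory.Functor

end

/-- If `C` is generated, as its own localizing subcategory, by a triangulated
subcategory `C'` of compact objects, and `F : C ⥤ D` is an exact coproduct-preserving
functor whose restriction to `C'` is fully faithful and which sends objects of `C'` to
compact objects of `D`, then `F` is fully faithful. -/
theorem fully_faithful_of_fully_faithful_on_compact_generators
    (D : Type u') [Category.{v} D] [HasZeroObject D] [HasShift D ℤ]
    [Preadditive D] [∀ n : ℤ, (shiftFunctor D n).Additive] [Pretriangulated D]
    [HasCoproducts.{v} D]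
    (C' : Set C)
    -- `C'` is a triangulated subcategory:
    (hshift : ∀ (n : ℤ) ⦃X : C⦄, X ∈ C' → X⟦n⟧ ∈ C')
    (hext : ∀ Tr : Triangle C, Tr ∈ (distTriang C) →
      Tr.obj₁ ∈ C' → Tr.obj₂ ∈ C' → Tr.obj₃ ∈ C')
    -- objects of `C'` are compact in `C`:
    (hcpt : ∀ X ∈ C', IsCompactObj C X)
    -- `C'` generates `C` as its own localizing subcategory:
    (hgen : ∀ T : Set C, IsLocalizingClass C T → C' ⊆ T → ∀ X : C, X ∈ T)
    (F : C ⥤ D) [F.CommShift ℤ] [F.IsTriangulated]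
    [∀ J : Type v, PreservesColimitsOfShape (Discrete J) F]
    -- the restriction of `F` to `C'` is a full embedding:
    (hff : ∀ (X Y : C), X ∈ C' → Y ∈ C' →
      Function.Bijective (fun f : X ⟶ Y => F.map f))
    -- `F` sends objects of `C'` into compact objects of `D`:
    (hFcpt : ∀ X ∈ C', IsCompactObj D (F.obj X)) :
    ∀ (X Y : C), Function.Bijective (fun f : X ⟶ Y => F.map f) := by
  have hC' : ∀ X ∈ C', ∀ Y : C, Function.Bijective (F.map : (X ⟶ Y) → _) := fun X hX Y ↦
    hgen _ (F.isLocalizingClass_setOf_bijective_map_of_source_mem C' hshift hcpt hFcpt)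
      (fun Y hY X hX ↦ hff X Y hX hY) Y X hX
  intro X Y
  exact hgen _
    (F.isLocalizingClass_setOf_bijective_map_of_target_mem Set.univ fun _ _ _ ↦ trivial)
    (fun X hX Y _ ↦ hC' X hX Y) X Y (Set.mem_univ Y)
end

section
/- For a weight structure w on a triangulated category C, the class C_{w≤0} equals the left orthogonal of C_{w≥1}, that is, C_{w≤0} = {M : Hom(M, N) = 0 for all N ∈ C_{w≥0}[1]}. -/
open CategoryTheory CategoryTheory.Limits CategoryTheory.Pretriangulated

universe v u u'

variable (C : Type u) [Category.{v} C] [HasZeroObject C] [HasShift C ℤ]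
  [Preadditive C] [∀ n : ℤ, (shiftFunctor C n).Additive] [Pretriangulated C]

/-- A weight structure on a triangulated category `C`:
a pair of Karoubi-closed classes `le = C_{w≤0}` and `ge = C_{w≥0}` satisfying
semi-invariance with respect to translations, orthogonality and the existence of
weight decompositions. -/
structure WeightStructure where
  /-- the class `C_{w≤0}` -/
  le : Set C
  /-- the class `C_{w≥0}` -/
  ge : Set C
  /-- `C_{w≤0}` is Karoubi-closed (contains all retracts of its elements) -/
  le_retract : ∀ ⦃M N : C⦄, N ∈ le → ∀ (i : M ⟶ N) (r : N ⟶ M), i ≫ r = 𝟙 M → M ∈ le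
  /-- `C_{w≥0}` is Karoubi-closed -/
  ge_retract : ∀ ⦃M N : C⦄, N ∈ ge → ∀ (i : M ⟶ N) (r : N ⟶ M), i ≫ r = 𝟙 M → M ∈ ge
  /-- `C_{w≤0} ⊆ C_{w≤0}[1]`, i.e. `M ∈ C_{w≤0} → M[-1] ∈ C_{w≤0}` -/
  le_shift : ∀ ⦃M : C⦄, M ∈ le → M⟦(-1 : ℤ)⟧ ∈ le
  /-- `C_{w≥0}[1] ⊆ C_{w≥0}` -/
  ge_shift : ∀ ⦃M : C⦄, M ∈ ge → M⟦(1 : ℤ)⟧ ∈ ge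
  /-- orthogonality: `C_{w≤0} ⊥ C_{w≥0}[1]` -/
  orth : ∀ ⦃M N : C⦄, M ∈ le → N ∈ ge → ∀ f : M ⟶ N⟦(1 : ℤ)⟧, f = 0
  /-- weight decompositions -/
  decomp : ∀ M : C, ∃ (L R : C) (f : L ⟶ M) (g : M ⟶ R) (h : R ⟶ L⟦(1 : ℤ)⟧),
    Triangle.mk f g h ∈ (distTriang C) ∧ L ∈ le ∧ R⟦(-1 : ℤ)⟧ ∈ ge

lemma eq_zero_of_forall_hom_shift_one_eq_zero {D : Type*} [Category D] [HasZeroMorphisms D]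
    [HasShift D ℤ] {S : Set D} {M R : D} (hM : ∀ N ∈ S, ∀ f : M ⟶ N⟦(1 : ℤ)⟧, f = 0)
    (hR : R⟦(-1 : ℤ)⟧ ∈ S) (g : M ⟶ R) : g = 0 :=
  (cancel_mono (shiftNegShift R (1 : ℤ)).inv).1 (by rw [hM _ hR (g ≫ _), zero_comp])

namespace WeightStructure

variable {C}

lemma mem_le_of_isSplitEpi (w : WeightStructure C) {L M : C} (f : L ⟶ M) [IsSplitEpi f]
    (hL : L ∈ w.le) : M ∈ w.le :=
  w.le_retract hL (section_ f) f (IsSplitEpi.id f)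

end WeightStructure

/-- For a weight structure `w` on `C`, the class `C_{w≤0}` equals the left orthogonal
of `C_{w≥1} = C_{w≥0}[1]`: `C_{w≤0} = {M | Hom(M, N[1]) = 0 for all N ∈ C_{w≥0}}`. -/
theorem le_eq_left_orthogonal (w : WeightStructure C) :
    w.le = {M : C | ∀ N ∈ w.ge, ∀ f : M ⟶ N⟦(1 : ℤ)⟧, f = 0} := by
  ext M
  refine ⟨fun hM N hN f => w.orth hM hN f, fun hM => ?_⟩
  obtain ⟨L, R, f, g, h, hT, hL, hR⟩ := w.decomp M
  have hg : g = 0 := eq_zero_of_forall_hom_shift_one_eq_zero hM hR g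
  -- With `g = 0` the triangle splits, so `M` is a retract of `L ∈ C_{w≤0}`.
  have : Epi f := Triangle.epi₁ _ hT hg
  have : IsSplitEpi f := isSplitEpi_of_epi f
  exact w.mem_le_of_isSplitEpi f hL
end

section
/- For a weight structure w on a triangulated category C, the class C_{w≥0} equals the right orthogonal of C_{w≤-1}, that is, C_{w≥0} = {N : Hom(M, N) = 0 for all M ∈ C_{w≤0}[-1]}. -/
open CategoryTheory CategoryTheory.Limits CategoryTheory.Pretriangulated

universe v u u'

variable (C : Type u) [Category.{v} C] [HasZeroObject C] [HasShift C ℤ]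
  [Preadditive C] [∀ n : ℤ, (shiftFunctor C n).Additive] [Pretriangulated C]

section Shift

variable {C : Type u} [Category.{v} C] [Preadditive C] [HasShift C ℤ]
  [∀ n : ℤ, (shiftFunctor C n).Additive]

/-- `(-1)` is left adjoint to `(1)`, and the adjunction isomorphism is additive. -/
lemma forall_shift_neg_one_hom_eq_zero_iff (X Y : C) :
    (∀ f : X⟦(-1 : ℤ)⟧ ⟶ Y, f = 0) ↔ ∀ g : X ⟶ Y⟦(1 : ℤ)⟧, g = 0 :=
  let adj : shiftFunctor C (-1 : ℤ) ⊣ shiftFunctor C (1 : ℤ) :=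
    (shiftEquiv' C (-1) 1 (by norm_num)).toAdjunction
  (adj.homAddEquiv X Y).forall_congr fun _ => (AddEquiv.map_eq_zero_iff _).symm

end Shift

namespace WeightStructure

variable {C} (w : WeightStructure C)

lemma mem_ge_of_retract {M N : C} (e : Retract M N) (hN : N ∈ w.ge) : M ∈ w.ge :=
  w.ge_retract hN e.i e.r e.retract

/-- Weight-decompose `N⟦1⟧ → R`: if `Hom(C_{w≤0}, N⟦1⟧) = 0`, the first map of the triangle
vanishes, so `N⟦1⟧ → R` is a split mono and `N` is a retract of `R⟦-1⟧ ∈ C_{w≥0}`. -/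
lemma mem_ge_of_forall_hom_shift_one_eq_zero {N : C}
    (hN : ∀ M ∈ w.le, ∀ f : M ⟶ N⟦(1 : ℤ)⟧, f = 0) : N ∈ w.ge := by
  obtain ⟨L, R, f, g, _, hT, hL, hR⟩ := w.decomp (N⟦(1 : ℤ)⟧)
  have : Mono g := Triangle.mono₂ _ hT (hN L hL f)
  have : IsSplitMono g := isSplitMono_of_mono g
  let e : Retract (N⟦(1 : ℤ)⟧) R := ⟨g, retraction g, IsSplitMono.id g⟩
  exact w.mem_ge_of_retract
    (((shiftEquiv C (1 : ℤ)).unitIso.app N).retract.trans (e.map (shiftFunctor C (-1 : ℤ)))) hR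

end WeightStructure

/-- For a weight structure `w` on `C`, the class `C_{w≥0}` equals the right orthogonal
of `C_{w≤-1} = C_{w≤0}[-1]`: `C_{w≥0} = {N | Hom(M[-1], N) = 0 for all M ∈ C_{w≤0}}`. -/
theorem ge_eq_right_orthogonal (w : WeightStructure C) :
    w.ge = {N : C | ∀ M ∈ w.le, ∀ f : M⟦(-1 : ℤ)⟧ ⟶ N, f = 0} := by
  ext N
  simp only [Set.mem_ofPred_eq, forall_shift_neg_one_hom_eq_zero_iff]
  exact ⟨fun hN M hM => w.orth hM hN, w.mem_ge_of_forall_hom_shift_one_eq_zero⟩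
end

section
/- Effective R-linear Chow motives lie in the heart of the Chow weight structure: for every smooth projective variety X over a perfect field k and every commutative ring R, the motive M_R(X) belongs to DM^{eff}_{R, w_{Chow}=0}; consequently the Karoubi closure Chow^{eff}_R of the category of such motives is contained in the heart of w_{Chow}^{eff}. -/
open CategoryTheory CategoryTheory.Limits CategoryTheory.Pretriangulated

universe v u u'

variable (C : Type u) [Category.{v} C] [HasZeroObject C] [HasShift C ℤ]
  [Preadditive C] [∀ n : ℤ, (shiftFunctor C n).Additive] [Pretriangulated C]

theorem shift_neg_hom_eq_zero {D G : Type*} [Category D] [HasZeroMorphisms D] [AddGroup G]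
    [HasShift D G] {A B : D} {i : G} (h : ∀ g : A ⟶ B⟦i⟧, g = 0) (f : A⟦-i⟧ ⟶ B) :
    f = 0 := by
  apply (shiftFunctor D i).map_injective
  rw [Functor.map_zero,
    ← cancel_epi ((shiftFunctorCompIsoId D (-i) i (neg_add_cancel i)).inv.app A), comp_zero]
  exact h _

namespace WeightStructure

variable {C}
variable (w : WeightStructure C)

def heart : Set C := w.le ∩ w.ge

theorem heart_retract {M N : C} (hN : N ∈ w.heart) (i : M ⟶ N) (r : N ⟶ M)
    (hir : i ≫ r = 𝟙 M) : M ∈ w.heart :=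
  ⟨w.le_retract hN.1 i r hir, w.ge_retract hN.2 i r hir⟩

/-- `M` is a retract of the `w.le`-part of its weight decomposition, the map to the
`w.ge`-part being zero. -/
theorem mem_le_of_forall_hom_eq_zero {M : C}
    (h : ∀ R : C, R⟦(-1 : ℤ)⟧ ∈ w.ge → ∀ g : M ⟶ R, g = 0) : M ∈ w.le := by
  obtain ⟨L, R, f, g, _, hT, hL, hR⟩ := w.decomp M
  obtain ⟨s, hs⟩ := Triangle.coyoneda_exact₂ _ hT (𝟙 M)
    (by rw [h R hR g]; exact Category.id_comp _)
  exact w.le_retract hL s f hs.symm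

def IsGeneratedBy {ι : Type*} (M : ι → C) : Prop :=
  w.ge = {N : C | ∀ X : ι, ∀ i : ℤ, 0 < i → ∀ f : (M X)⟦-i⟧ ⟶ N, f = 0}

namespace IsGeneratedBy

variable {w} {ι : Type*} {M : ι → C} (hgen : w.IsGeneratedBy M)
include hgen

theorem mem_le (X : ι) : M X ∈ w.le :=
  w.mem_le_of_forall_hom_eq_zero fun R hR g =>
    (shiftFunctor C (-1 : ℤ)).map_injective <| by
      rw [hgen] at hR
      rw [Functor.map_zero]
      exact hR X 1 one_pos _

theorem mem_ge_of_forall_hom_eq_zero {N : C}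
    (hN : ∀ (Y : ι) (i : ℤ), 0 < i → ∀ f : M Y ⟶ N⟦i⟧, f = 0) : N ∈ w.ge := by
  rw [hgen]
  exact fun Y i hi => shift_neg_hom_eq_zero (hN Y i hi)

end IsGeneratedBy

end WeightStructure

/-- Abstract setting: `C` is `DM^{eff}_R`, `Var` indexes the smooth `k`-varieties, `M X` is the
motive of `X`, `proper X` says that `X` is smooth projective, and `w` is the Chow weight
structure generated by `{M X : X ∈ Var}`. -/
theorem chow_motives_in_heart
    (Var : Type u') (M : Var → C) (proper : Var → Prop)
    (w : WeightStructure C)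
    -- `w` is generated by the motives of all smooth varieties:
    (hgen : w.ge = {N : C | ∀ X : Var, ∀ i : ℤ, 0 < i → ∀ f : (M X)⟦-i⟧ ⟶ N, f = 0})
    -- vanishing of positive-degree morphisms into motives of smooth projective varieties:
    (horth : ∀ (Y X : Var), proper X → ∀ i : ℤ, 0 < i → ∀ f : M Y ⟶ (M X)⟦i⟧, f = 0) :
    (∀ X : Var, proper X → M X ∈ w.le ∩ w.ge) ∧
    (∀ (N : C) (X : Var), proper X →
      (∃ (i : N ⟶ M X) (r : M X ⟶ N), i ≫ r = 𝟙 N) → N ∈ w.le ∩ w.ge) := by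
  have generated : w.IsGeneratedBy M := hgen
  have mem_heart : ∀ X : Var, proper X → M X ∈ w.heart := fun X hX =>
    ⟨generated.mem_le X, generated.mem_ge_of_forall_hom_eq_zero fun Y => horth Y X hX⟩
  exact ⟨mem_heart, fun N X hX ⟨i, r, hir⟩ => w.heart_retract (mem_heart X hX) i r hir⟩
end
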